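/- Let U ⊆ ℍ be an axially symmetric open set and f : U → ℍ left slice hyperholomorphic. Then for every q ∈ U∖ℝ: D̄f(q) = (Im q)⁻¹·(2·𝔼f(q) + Γf(q)), where 𝔼 is the Euler operator and Γ the Gamma operator. -/

import Mathlib

set_option maxHeartbeats 1600000
noncomputable section
open Quaternion

/-- The imaginary units of `ℍ`. -/
def e1 : ℍ[ℝ] := ⟨0, 1, 0, 0⟩
def e2 : ℍ[ℝ] := ⟨0, 0, 1, 0⟩
def e3 : ℍ[ℝ] := ⟨0, 0, 0, 1⟩

/-- The conjugate Cauchy–Fueter operator `D̄f = ∂₀f − e₁∂₁f − e₂∂₂f − e₃∂₃f`. -/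
def CFbar (f : ℍ[ℝ] → ℍ[ℝ]) (q : ℍ[ℝ]) : ℍ[ℝ] :=
  fderiv ℝ f q 1 - e1 * fderiv ℝ f q e1 - e2 * fderiv ℝ f q e2 - e3 * fderiv ℝ f q e3

/-- The spherical Gamma operator
`Γf(q) = −∑_{1≤j<k≤3} eⱼeₖ (qⱼ∂ₖf(q) − qₖ∂ⱼf(q))`. -/
def Gammaop (f : ℍ[ℝ] → ℍ[ℝ]) (q : ℍ[ℝ]) : ℍ[ℝ] :=
  -((e1 * e2) * (q.imI • fderiv ℝ f q e2 - q.imJ • fderiv ℝ f q e1) +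
    (e1 * e3) * (q.imI • fderiv ℝ f q e3 - q.imK • fderiv ℝ f q e1) +
    (e2 * e3) * (q.imJ • fderiv ℝ f q e3 - q.imK • fderiv ℝ f q e2))

/-- The Euler operator `𝔼f(q) = ∑_{k=1}^{3} qₖ ∂ₖ f(q)`. -/
def Eulerop (f : ℍ[ℝ] → ℍ[ℝ]) (q : ℍ[ℝ]) : ℍ[ℝ] :=
  q.imI • fderiv ℝ f q e1 + q.imJ • fderiv ℝ f q e2 + q.imK • fderiv ℝ f q e3

/-- `U ⊆ ℍ` is axially symmetric. -/
def AxiallySymmetric (U : Set ℍ[ℝ]) : Prop :=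
  ∀ (u v : ℝ) (I J : ℍ[ℝ]), I.re = 0 → ‖I‖ = 1 → J.re = 0 → ‖J‖ = 1 →
    (u : ℍ[ℝ]) + v • I ∈ U → (u : ℍ[ℝ]) + v • J ∈ U

/-- `f` is left slice hyperholomorphic on `U` with defining pair `(α, β)`. -/
structure IsSliceHyperholomorphic (U : Set ℍ[ℝ]) (f : ℍ[ℝ] → ℍ[ℝ])
    (α β : ℝ × ℝ → ℍ[ℝ]) : Prop where
  contDiff_α : ContDiff ℝ 1 α
  contDiff_β : ContDiff ℝ 1 β
  even_α : ∀ u v : ℝ, α (u, -v) = α (u, v)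
  odd_β : ∀ u v : ℝ, β (u, -v) = -β (u, v)
  CR₁ : ∀ u v : ℝ, fderiv ℝ α (u, v) (1, 0) - fderiv ℝ β (u, v) (0, 1) = 0
  CR₂ : ∀ u v : ℝ, fderiv ℝ α (u, v) (0, 1) + fderiv ℝ β (u, v) (1, 0) = 0
  rep : ∀ (u v : ℝ) (I : ℍ[ℝ]), I.re = 0 → ‖I‖ = 1 →
    (u : ℍ[ℝ]) + v • I ∈ U → f ((u : ℍ[ℝ]) + v • I) = α (u, v) + I * β (u, v)

namespace CFaux

/-- coordinate continuous linear maps on `ℍ` -/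
def reCLM : ℍ[ℝ] →L[ℝ] ℝ := ⟨QuaternionAlgebra.reₗ _ _ _, Quaternion.continuous_re⟩
def imICLM : ℍ[ℝ] →L[ℝ] ℝ := ⟨QuaternionAlgebra.imIₗ _ _ _, Quaternion.continuous_imI⟩
def imJCLM : ℍ[ℝ] →L[ℝ] ℝ := ⟨QuaternionAlgebra.imJₗ _ _ _, Quaternion.continuous_imJ⟩
def imKCLM : ℍ[ℝ] →L[ℝ] ℝ := ⟨QuaternionAlgebra.imKₗ _ _ _, Quaternion.continuous_imK⟩

def imCLM : ℍ[ℝ] →L[ℝ] ℍ[ℝ] :=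
  ⟨{ toFun := Quaternion.im
     map_add' := fun a b => by ext <;> simp
     map_smul' := fun s a => by ext <;> simp }, Quaternion.continuous_im⟩

@[simp] lemma reCLM_apply (p : ℍ[ℝ]) : reCLM p = p.re := rfl
@[simp] lemma imICLM_apply (p : ℍ[ℝ]) : imICLM p = p.imI := rfl
@[simp] lemma imJCLM_apply (p : ℍ[ℝ]) : imJCLM p = p.imJ := rfl
@[simp] lemma imKCLM_apply (p : ℍ[ℝ]) : imKCLM p = p.imK := rfl
@[simp] lemma imCLM_apply (p : ℍ[ℝ]) : imCLM p = p.im := rfl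

@[simp] lemma im_one : (1 : ℍ[ℝ]).im = 0 := by ext <;> simp
@[simp] lemma e1_re : e1.re = 0 := rfl
@[simp] lemma e1_imI : e1.imI = 1 := rfl
@[simp] lemma e1_imJ : e1.imJ = 0 := rfl
@[simp] lemma e1_imK : e1.imK = 0 := rfl
@[simp] lemma e2_re : e2.re = 0 := rfl
@[simp] lemma e2_imI : e2.imI = 0 := rfl
@[simp] lemma e2_imJ : e2.imJ = 1 := rfl
@[simp] lemma e2_imK : e2.imK = 0 := rfl
@[simp] lemma e3_re : e3.re = 0 := rfl
@[simp] lemma e3_imI : e3.imI = 0 := rfl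
@[simp] lemma e3_imJ : e3.imJ = 0 := rfl
@[simp] lemma e3_imK : e3.imK = 1 := rfl

/-- The norm of the imaginary part, in coordinates. -/
def rho (p : ℍ[ℝ]) : ℝ := Real.sqrt (p.imI ^ 2 + p.imJ ^ 2 + p.imK ^ 2)

lemma rho_eq_norm (p : ℍ[ℝ]) : rho p = ‖p.im‖ := by
  rw [norm_eq_sqrt_real_inner, inner_self, normSq_def']
  simp [rho]

lemma rho_sq_pos {p : ℍ[ℝ]} (h : p.im ≠ 0) : 0 < p.imI ^ 2 + p.imJ ^ 2 + p.imK ^ 2 := by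
  rcases lt_or_eq_of_le (by positivity : (0:ℝ) ≤ p.imI ^ 2 + p.imJ ^ 2 + p.imK ^ 2) with h' | h'
  · exact h'
  · exfalso
    apply h
    have h1 : p.imI = 0 := by nlinarith [sq_nonneg p.imI, sq_nonneg p.imJ, sq_nonneg p.imK]
    have h2 : p.imJ = 0 := by nlinarith [sq_nonneg p.imI, sq_nonneg p.imJ, sq_nonneg p.imK]
    have h3 : p.imK = 0 := by nlinarith [sq_nonneg p.imI, sq_nonneg p.imJ, sq_nonneg p.imK]
    ext <;> simp [h1, h2, h3]

lemma rho_pos {p : ℍ[ℝ]} (h : p.im ≠ 0) : 0 < rho p := Real.sqrt_pos.2 (rho_sq_pos h)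

lemma rho_sq {p : ℍ[ℝ]} (h : p.im ≠ 0) : (rho p) ^ 2 = p.imI ^ 2 + p.imJ ^ 2 + p.imK ^ 2 :=
  Real.sq_sqrt (rho_sq_pos h).le

lemma hasFDerivAt_rho (q : ℍ[ℝ]) (h : q.im ≠ 0) :
    HasFDerivAt rho
      ((rho q)⁻¹ • (q.imI • imICLM + q.imJ • imJCLM + q.imK • imKCLM)) q := by
  have hs0 := rho_sq_pos h
  have h1 : HasFDerivAt (fun p : ℍ[ℝ] => p.imI ^ 2 + p.imJ ^ 2 + p.imK ^ 2)
      ((q.imI • imICLM + q.imI • imICLM) + (q.imJ • imJCLM + q.imJ • imJCLM)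
        + (q.imK • imKCLM + q.imK • imKCLM)) q := by
    simp only [pow_two]
    exact ((imICLM.hasFDerivAt.mul imICLM.hasFDerivAt).add
      (imJCLM.hasFDerivAt.mul imJCLM.hasFDerivAt)).add
      (imKCLM.hasFDerivAt.mul imKCLM.hasFDerivAt)
  have h2 := (Real.hasDerivAt_sqrt hs0.ne').comp_hasFDerivAt q h1
  have hrne : rho q ≠ 0 := (rho_pos h).ne'
  refine h2.congr_fderiv ?_
  ext v
  simp only [ContinuousLinearMap.smul_apply, ContinuousLinearMap.add_apply,
    imICLM_apply, imJCLM_apply, imKCLM_apply, smul_eq_mul]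
  rw [show Real.sqrt (q.imI ^ 2 + q.imJ ^ 2 + q.imK ^ 2) = rho q from rfl]
  field_simp
  ring

def gfun (α β : ℝ × ℝ → ℍ[ℝ]) (p : ℍ[ℝ]) : ℍ[ℝ] :=
  α (p.re, rho p) + ((rho p)⁻¹ • p.im) * β (p.re, rho p)

lemma f_eventually_eq {U : Set ℍ[ℝ]} (hUo : IsOpen U) {f : ℍ[ℝ] → ℍ[ℝ]}
    {α β : ℝ × ℝ → ℍ[ℝ]} (hslice : IsSliceHyperholomorphic U f α β)
    {q : ℍ[ℝ]} (hqU : q ∈ U) (hq0 : q.im ≠ 0) : f =ᶠ[nhds q] gfun α β := by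
  have hV : IsOpen (U ∩ {p : ℍ[ℝ] | p.im ≠ 0}) := by
    refine hUo.inter ?_
    have : {p : ℍ[ℝ] | p.im ≠ 0} = Quaternion.im ⁻¹' ({0}ᶜ) := rfl
    rw [this]
    exact IsOpen.preimage Quaternion.continuous_im isOpen_compl_singleton
  filter_upwards [hV.mem_nhds ⟨hqU, hq0⟩] with p hp
  obtain ⟨hpU, hp0⟩ := hp
  have ht0 : 0 < rho p := rho_pos hp0
  have hIre : ((rho p)⁻¹ • p.im).re = 0 := by simp
  have hInorm : ‖(rho p)⁻¹ • p.im‖ = 1 := by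
    rw [norm_smul, ← rho_eq_norm, Real.norm_eq_abs, abs_of_pos (inv_pos.2 ht0),
      inv_mul_cancel₀ ht0.ne']
  have hpe : (↑p.re : ℍ[ℝ]) + rho p • ((rho p)⁻¹ • p.im) = p := by
    rw [smul_smul, mul_inv_cancel₀ ht0.ne', one_smul, re_add_im]
  have hrep := hslice.rep p.re (rho p) _ hIre hInorm (by rw [hpe]; exact hpU)
  rw [hpe] at hrep
  exact hrep

end CFaux

open CFaux in
/-- `D̄f(q) = (Im q)⁻¹ (2𝔼f(q) + Γf(q))` for a left slice hyperholomorphic `f`. -/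
theorem CFbar_eq_inv_im_mul_Euler_Gamma (U : Set ℍ[ℝ])
    (hUo : IsOpen U) (hUs : AxiallySymmetric U)
    (f : ℍ[ℝ] → ℍ[ℝ]) (α β : ℝ × ℝ → ℍ[ℝ])
    (hslice : IsSliceHyperholomorphic U f α β) :
    ∀ q ∈ U, Quaternion.im q ≠ 0 →
      CFbar f q = (Quaternion.im q)⁻¹ * ((2 : ℝ) • Eulerop f q + Gammaop f q) := by
  intro q hqU hq0
  have hr0 : 0 < rho q := rho_pos hq0
  have hr2 := rho_sq hq0
  have hρ := hasFDerivAt_rho q hq0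
  have hre : HasFDerivAt (fun p : ℍ[ℝ] => p.re) reCLM q := reCLM.hasFDerivAt
  have him : HasFDerivAt (fun p : ℍ[ℝ] => p.im) imCLM q := imCLM.hasFDerivAt
  have hφ := hre.prodMk hρ
  have hαd : HasFDerivAt α (fderiv ℝ α (q.re, rho q)) (q.re, rho q) :=
    ((hslice.contDiff_α.differentiable one_ne_zero) _).hasFDerivAt
  have hβd : HasFDerivAt β (fderiv ℝ β (q.re, rho q)) (q.re, rho q) :=
    ((hslice.contDiff_β.differentiable one_ne_zero) _).hasFDerivAt
  have hg := (hαd.comp q hφ).add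
    ((((hasDerivAt_inv hr0.ne').comp_hasFDerivAt q hρ).smul him).mul' (hβd.comp q hφ))
  have hfd : fderiv ℝ f q = _ :=
    (f_eventually_eq hUo hslice hqU hq0).fderiv_eq.trans (HasFDerivAt.fderiv hg)
  simp only [CFbar, Eulerop, Gammaop, hfd]
  simp only [ContinuousLinearMap.add_apply, ContinuousLinearMap.coe_comp',
    Function.comp_apply, Pi.smul_apply', ContinuousLinearMap.prod_apply, ContinuousLinearMap.smul_apply,
    ContinuousLinearMap.smulRight_apply, reCLM_apply, imICLM_apply, imJCLM_apply,
    imKCLM_apply, imCLM_apply, smul_eq_mul, re_one, imI_one, imJ_one, imK_one,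
    e1_re, e1_imI, e1_imJ, e1_imK, e2_re, e2_imI, e2_imJ, e2_imK,
    e3_re, e3_imI, e3_imJ, e3_imK, mul_zero, mul_one, zero_add, add_zero, zero_mul,
    zero_smul, smul_zero, CFaux.im_one]
  set r := CFaux.rho q with hrdef
  set A := fderiv ℝ α (q.re, r) ((1:ℝ), (0:ℝ)) with hA
  set B := fderiv ℝ β (q.re, r) ((1:ℝ), (0:ℝ)) with hB
  set C := fderiv ℝ α (q.re, r) ((0:ℝ), (1:ℝ)) with hC
  set Dv := fderiv ℝ β (q.re, r) ((0:ℝ), (1:ℝ)) with hDv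
  have hDα : ∀ a b : ℝ, fderiv ℝ α (q.re, r) (a, b) = a • A + b • C := by
    intro a b
    rw [hA, hC, show ((a, b) : ℝ × ℝ) = a • ((1:ℝ), (0:ℝ)) + b • ((0:ℝ), (1:ℝ)) by simp,
      map_add, map_smul, map_smul]
  have hDβ : ∀ a b : ℝ, fderiv ℝ β (q.re, r) (a, b) = a • B + b • Dv := by
    intro a b
    rw [hB, hDv, show ((a, b) : ℝ × ℝ) = a • ((1:ℝ), (0:ℝ)) + b • ((0:ℝ), (1:ℝ)) by simp,
      map_add, map_smul, map_smul]
  simp only [hDα, hDβ]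
  have hCR1 : A = Dv := by
    have h := hslice.CR₁ q.re r
    rw [← hA, ← hDv] at h
    exact sub_eq_zero.mp h
  have hCR2 : C = -B := by
    have h := hslice.CR₂ q.re r
    rw [← hC, ← hB] at h
    exact eq_neg_of_add_eq_zero_left h
  rw [hCR2, ← hCR1]
  rw [eq_inv_mul_iff_mul_eq₀ hq0]
  set b0 := β (q.re, r) with hb0
  have hrne : r ≠ 0 := hr0.ne'
  set u := r⁻¹ with hu
  rw [show ((r:ℝ) ^ 2)⁻¹ = u * u from by rw [sq, mul_inv, ← hu]]
  have hsu : (q.imI ^ 2 + q.imJ ^ 2 + q.imK ^ 2) * (u * u) = 1 := by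
    rw [← hr2, hu]
    field_simp
  ext <;>
    simp only [Quaternion.re_mul, Quaternion.imI_mul, Quaternion.imJ_mul, Quaternion.imK_mul,
      Quaternion.re_add, Quaternion.imI_add, Quaternion.imJ_add, Quaternion.imK_add,
      Quaternion.re_sub, Quaternion.imI_sub, Quaternion.imJ_sub, Quaternion.imK_sub,
      Quaternion.re_neg, Quaternion.imI_neg, Quaternion.imJ_neg, Quaternion.imK_neg,
      Quaternion.re_smul, Quaternion.imI_smul, Quaternion.imJ_smul, Quaternion.imK_smul,
      Quaternion.re_im, Quaternion.imI_im, Quaternion.imJ_im, Quaternion.imK_im,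
      e1_re, e1_imI, e1_imJ, e1_imK, e2_re, e2_imI, e2_imJ, e2_imK,
      e3_re, e3_imI, e3_imJ, e3_imK, smul_eq_mul, op_smul_eq_mul]
  · linear_combination ((-1:ℝ) * u * q.imI * b0.imI + (-1:ℝ) * u * q.imJ * b0.imJ + (-1:ℝ) * u * q.imK * b0.imK + q.imI * A.imI + q.imJ * A.imJ + q.imK * A.imK) * hsu
  · linear_combination (u * q.imI * b0.re + u * q.imJ * b0.imK + (-1:ℝ) * u * q.imK * b0.imJ + (-1:ℝ) * q.imI * A.re + (-1:ℝ) * q.imJ * A.imK + q.imK * A.imJ) * hsu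
  · linear_combination ((-1:ℝ) * u * q.imI * b0.imK + u * q.imJ * b0.re + u * q.imK * b0.imI + q.imI * A.imK + (-1:ℝ) * q.imJ * A.re + (-1:ℝ) * q.imK * A.imI) * hsu
  · linear_combination (u * q.imI * b0.imJ + (-1:ℝ) * u * q.imJ * b0.imI + u * q.imK * b0.re + (-1:ℝ) * q.imI * A.imJ + q.imJ * A.imI + (-1:ℝ) * q.imK * A.re) * hsu
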